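/- arXiv:0810.2578 — 9 statements merged into one kernel-verified Lean document; each statement's English description precedes it below -/
import Mathlib

section
/- A small category D is sifted (i.e., colimits of shape D commute with finite products in Set) if and only if D is nonempty and for every pair of objects A, B in D, the category of cospans from A to B (objects of D equipped with morphisms from both A and B) is connected. -/
open CategoryTheory Limits

universe u

theorem CategoryTheory.isSifted_iff_nonempty_and_isConnected_cospans {C : Type*} [Category C] :
    IsSifted C ↔ Nonempty C ∧
      ∀ A B : C, IsConnected (StructuredArrow ((A, B) : C × C) (Functor.diag C)) :=
  ⟨fun h => ⟨h.nonempty, fun A B => h.out (A, B)⟩,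
    fun ⟨hne, hconn⟩ => { out := fun AB => hconn AB.1 AB.2, nonempty := hne }⟩

theorem CategoryTheory.isSifted_iff_colim_preservesFiniteProducts (D : Type u)
    [SmallCategory D] :
    IsSifted D ↔ Nonempty (PreservesFiniteProducts (colim : (D ⥤ Type u) ⥤ Type u)) :=
  ⟨fun _ => ⟨inferInstance⟩, fun ⟨_⟩ => IsSifted.of_colim_preservesFiniteProducts D⟩

/-- A small category `D` is sifted (colimits of shape `D` commute with finite products in `Set`,
i.e. `D` is nonempty and the colimit functor `(D ⥤ Type) ⥤ Type` preserves finite products)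
if and only if `D` is nonempty and for all `A B : D` the category of cospans from `A` to `B`
is connected. -/
theorem stmt0 (D : Type u) [SmallCategory D] :
    (Nonempty D ∧ Nonempty (PreservesFiniteProducts (colim : (D ⥤ Type u) ⥤ Type u))) ↔
      (Nonempty D ∧ ∀ A B : D,
        IsConnected (StructuredArrow ((A, B) : D × D) (Functor.diag D))) := by
  rw [← isSifted_iff_nonempty_and_isConnected_cospans,
    ← isSifted_iff_colim_preservesFiniteProducts]
  exact and_iff_right_of_imp fun h => h.nonempty
end

section
/- A functor F : A^op → Set (with A small) is a sifted colimit of representable functors if and only if its left Kan extension along the Yoneda embedding, Lan_Y F : [A^op, Set] → Set, preserves finite products. -/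
/-!
Write `El` for `F.Elementsᵒᵖ` and `T G = colim_{(a, x) ∈ El} G a`. If `F ≅ colim (G ⋙ yoneda)` with
`D` sifted, the induced functor `D ⥤ El` is final, so `El` is sifted and `colim` over `El` commutes
with finite products in `Type`.

Conversely, `T` sends the corepresentable `A(c, -)` to `F c`, so preservation of the product
`A(c₁, -) × A(c₂, -)` says that `T (A(c₁, -) × A(c₂, -)) → F c₁ × F c₂` is bijective. Since `El`
is a discrete fibration over `A`, the fibre of this map over `(x₁, x₂)` is the colimit of
`El((c₁, x₁), -) × El((c₂, x₂), -)`, which is therefore a point: the diagonal of `El` is final.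
Preservation of the terminal object makes `El` nonempty.
-/

open CategoryTheory Limits Opposite MonoidalCategory

universe u

namespace CategoryTheory.Limits.Types

variable {J : Type u} [SmallCategory J] {V W : J ⥤ Type u} {X : Type u}
  {m : V ⟶ W} {φ : W ⟶ (Functor.const J).obj X} {x : X}

/-- On `m v` this cocone takes the value `{[v]}` (`fiberCocone_ι_app_apply`), so it tells apart
classes of `colimit V` whose images in `colimit W` agree. -/
def fiberCocone (hm : ∀ j, Function.Injective (m.app j))
    (hx : ∀ j w, φ.app j w = x ↔ ∃ v, m.app j v = w) : Cocone W where
  pt := Set (colimit V)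
  ι.app j := ↾fun w => colimit.ι V j '' (m.app j ⁻¹' {w})
  ι.naturality j j' f := by
    ext w
    dsimp
    ext t
    constructor
    · rintro ⟨v', hv', rfl⟩
      obtain ⟨v, rfl⟩ := (hx j w).1 (by
        rw [← (hx j' _).2 ⟨v', hv'⟩]
        exact (NatTrans.naturality_apply φ f w).symm)
      refine ⟨v, rfl, ?_⟩
      rw [← colimit.w_apply V f, hm j' (hv'.trans (NatTrans.naturality_apply m f v).symm)]
    · rintro ⟨v, rfl, rfl⟩
      exact ⟨V.map f v, Set.mem_singleton_iff.2 (NatTrans.naturality_apply m f v),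
        colimit.w_apply V f v⟩

theorem fiberCocone_ι_app_apply (hm : ∀ j, Function.Injective (m.app j))
    (hx : ∀ j w, φ.app j w = x ↔ ∃ v, m.app j v = w) (j : J) (v : V.obj j) :
    (fiberCocone hm hx).ι.app j (m.app j v) = ({colimit.ι V j v} : Set (colimit V)) := by
  change colimit.ι V j '' (m.app j ⁻¹' {m.app j v}) = _
  rw [← Set.image_singleton, (hm j).preimage_image, Set.image_singleton]

theorem nonempty_colimit_iso_pUnit_of_isFiber (hm : ∀ j, Function.Injective (m.app j))
    (hx : ∀ j w, φ.app j w = x ↔ ∃ v, m.app j v = w)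
    (hφ : Function.Bijective (colimit.desc W ⟨X, φ⟩)) :
    Nonempty (colimit V ≅ PUnit.{u + 1}) := by
  have desc_ι (j) (w : W.obj j) : colimit.desc W ⟨X, φ⟩ (colimit.ι W j w) = φ.app j w :=
    colimit.ι_desc_apply _ _ _
  obtain ⟨t₀, ht₀⟩ := hφ.2 x
  obtain ⟨j₀, w₀, rfl⟩ := jointly_surjective' t₀
  obtain ⟨v₀, -⟩ := (hx j₀ w₀).1 ((desc_ι j₀ w₀).symm.trans ht₀)
  have : Subsingleton (colimit V) := by
    refine ⟨fun t₁ t₂ => ?_⟩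
    obtain ⟨j₁, v₁, rfl⟩ := jointly_surjective' t₁
    obtain ⟨j₂, v₂, rfl⟩ := jointly_surjective' t₂
    have hW : colimit.ι W j₁ (m.app j₁ v₁) = colimit.ι W j₂ (m.app j₂ v₂) :=
      hφ.1 (by rw [desc_ι, desc_ι, (hx _ _).2 ⟨v₁, rfl⟩, (hx _ _).2 ⟨v₂, rfl⟩])
    have hsets := congrArg (colimit.desc W (fiberCocone hm hx)) hW
    rw [colimit.ι_desc_apply, colimit.ι_desc_apply, fiberCocone_ι_app_apply,
      fiberCocone_ι_app_apply] at hsets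
    exact Set.singleton_eq_singleton_iff.1 hsets
  exact ⟨(@Equiv.equivPUnit _ (uniqueOfSubsingleton (colimit.ι V j₀ v₀))).toIso⟩

end CategoryTheory.Limits.Types

namespace CategoryTheory.CategoryOfElements

variable {A : Type u} [SmallCategory A] (F : Aᵒᵖ ⥤ Type u)

theorem isSifted_of_isSifted_colimit_iso {D : Type u} [SmallCategory D] [IsSifted D] (G : D ⥤ A)
    (e : colimit (G ⋙ yoneda) ≅ F) : IsSifted F.Elementsᵒᵖ := by
  have : IsSifted (CostructuredArrow yoneda F) := @IsSifted.of_final_functor_from_sifted _ _ _ _ _ _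
    (Presheaf.final_toCostructuredArrow_comp_pre G ((colimit.isColimit _).extendIso e.hom))
  exact IsSifted.isSifted_of_equiv (costructuredArrowYonedaEquivalence F)

noncomputable def colimitLeftOpCompYonedaIso : colimit ((π F).leftOp ⋙ yoneda) ≅ F :=
  colimit.isoColimitCocone ⟨_, (Presheaf.isColimitTautologicalCocone F).whiskerEquivalence
    (costructuredArrowYonedaEquivalence F)⟩

theorem exists_leftOp_map_eq_iff {e e' : F.Elementsᵒᵖ}
    (f : (π F).leftOp.obj e' ⟶ (π F).leftOp.obj e) :
    (∃ g : e' ⟶ e, (π F).leftOp.map g = f) ↔ F.map f.op e.unop.2 = e'.unop.2 :=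
  ⟨fun ⟨g, hg⟩ => hg ▸ g.unop.2, fun h => ⟨(homMk e.unop e'.unop f.op h).op, rfl⟩⟩

def coconeCoyoneda (c : A) : Cocone ((π F).leftOp ⋙ coyoneda.obj (op c)) where
  pt := F.obj (op c)
  ι.app e := ↾fun f => F.map f.op e.unop.2
  ι.naturality e e' g := by
    ext f
    exact (F.map_comp_apply _ _ _).trans (congrArg (F.map f.op) g.unop.2)

theorem colimit_ι_eq_ι_id {c : A} (e : F.Elementsᵒᵖ) (f : c ⟶ (π F).leftOp.obj e) :
    colimit.ι ((π F).leftOp ⋙ coyoneda.obj (op c)) e f =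
      colimit.ι ((π F).leftOp ⋙ coyoneda.obj (op c))
        (op (F.elementsMk (op c) (F.map f.op e.unop.2))) (𝟙 c) := by
  obtain ⟨g, hg⟩ := (exists_leftOp_map_eq_iff F
    (e' := op (F.elementsMk (op c) (F.map f.op e.unop.2))) f).2 rfl
  exact (congrArg _ ((Category.id_comp _).trans hg)).symm.trans (colimit.w_apply _ g _)

theorem bijective_desc_coconeCoyoneda (c : A) :
    Function.Bijective (colimit.desc _ (coconeCoyoneda F c)) := by
  constructor
  · intro t₁ t₂ h
    obtain ⟨e₁, f₁, rfl⟩ := Types.jointly_surjective' t₁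
    obtain ⟨e₂, f₂, rfl⟩ := Types.jointly_surjective' t₂
    rw [colimit.ι_desc_apply, colimit.ι_desc_apply] at h
    refine (colimit_ι_eq_ι_id F e₁ f₁).trans (Eq.trans ?_ (colimit_ι_eq_ι_id F e₂ f₂).symm)
    exact congrArg
      (fun y => colimit.ι ((π F).leftOp ⋙ coyoneda.obj (op c)) (op (F.elementsMk (op c) y)) (𝟙 c)) h
  · intro (y : F.obj (op c))
    refine ⟨colimit.ι ((π F).leftOp ⋙ coyoneda.obj (op c)) (op (F.elementsMk (op c) y)) (𝟙 c), ?_⟩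
    exact (colimit.ι_desc_apply _ _ _).trans (F.map_id_apply _ y)

noncomputable abbrev weightedColim : (A ⥤ Type u) ⥤ Type u :=
  (Functor.whiskeringLeft F.Elementsᵒᵖ A (Type u)).obj (π F).leftOp ⋙ colim

theorem weightedColim_map_ι_apply {Q Q' : A ⥤ Type u} (α : Q ⟶ Q') (e : F.Elementsᵒᵖ)
    (f : Q.obj ((π F).leftOp.obj e)) :
    (weightedColim F).map α (colimit.ι ((π F).leftOp ⋙ Q) e f) =
      colimit.ι ((π F).leftOp ⋙ Q') e (α.app _ f) :=
  types_congr_hom (ι_colimMap (Functor.whiskerLeft _ α) e) f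

def coconeCoyonedaTensor (c₁ c₂ : A) :
    Cocone ((π F).leftOp ⋙ (coyoneda.obj (op c₁) ⊗ coyoneda.obj (op c₂))) where
  pt := F.obj (op c₁) × F.obj (op c₂)
  ι.app e := ↾fun f => ((coconeCoyoneda F c₁).ι.app e f.1, (coconeCoyoneda F c₂).ι.app e f.2)
  ι.naturality e e' g := by
    ext f
    exact Prod.ext (types_congr_hom ((coconeCoyoneda F c₁).ι.naturality g) f.1)
      (types_congr_hom ((coconeCoyoneda F c₂).ι.naturality g) f.2)

theorem desc_coconeCoyonedaTensor (c₁ c₂ : A) :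
    ⇑(colimit.desc _ (coconeCoyonedaTensor F c₁ c₂)) =
      Prod.map (colimit.desc _ (coconeCoyoneda F c₁)) (colimit.desc _ (coconeCoyoneda F c₂)) ∘
        CartesianMonoidalCategory.prodComparison (weightedColim F)
          (coyoneda.obj (op c₁)) (coyoneda.obj (op c₂)) := by
  funext t
  obtain ⟨e, f, rfl⟩ := Types.jointly_surjective' t
  refine (colimit.ι_desc_apply _ _ _).trans (Prod.ext ?_ ?_)
  · exact (colimit.ι_desc_apply _ _ _).symm.trans
      (congrArg _ (weightedColim_map_ι_apply F (SemiCartesianMonoidalCategory.fst _ _) e f).symm)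
  · exact (colimit.ι_desc_apply _ _ _).symm.trans
      (congrArg _ (weightedColim_map_ι_apply F (SemiCartesianMonoidalCategory.snd _ _) e f).symm)

theorem bijective_desc_coconeCoyonedaTensor (c₁ c₂ : A)
    [PreservesLimit (pair (coyoneda.obj (op c₁)) (coyoneda.obj (op c₂))) (weightedColim F)] :
    Function.Bijective (colimit.desc _ (coconeCoyonedaTensor F c₁ c₂)) := by
  rw [desc_coconeCoyonedaTensor]
  exact ((bijective_desc_coconeCoyoneda F c₁).prodMap (bijective_desc_coconeCoyoneda F c₂)).comp
    ((isIso_iff_bijective _).1 inferInstance)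

theorem isSiftedOrEmpty_of_preservesBinaryProducts
    [PreservesLimitsOfShape (Discrete WalkingPair) (weightedColim F)] :
    IsSiftedOrEmpty F.Elementsᵒᵖ := by
  refine Functor.final_of_colimit_comp_coyoneda_iso_pUnit _ fun ⟨e₁, e₂⟩ => ?_
  let p := (π F).leftOp
  let m : Functor.diag F.Elementsᵒᵖ ⋙ coyoneda.obj (op (e₁, e₂)) ⟶
      p ⋙ (coyoneda.obj (op (p.obj e₁)) ⊗ coyoneda.obj (op (p.obj e₂))) :=
    { app e := ↾fun g => (p.map g.1, p.map g.2) }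
  refine (Types.nonempty_colimit_iso_pUnit_of_isFiber (m := m) (x := (e₁.unop.2, e₂.unop.2))
    (fun e g g' h => ?_) (fun e f => ?_) (bijective_desc_coconeCoyonedaTensor F _ _)).some
  · exact Prod.ext (p.map_injective (Prod.ext_iff.1 h).1) (p.map_injective (Prod.ext_iff.1 h).2)
  · obtain ⟨f₁, f₂⟩ := f
    change (F.map f₁.op e.unop.2, F.map f₂.op e.unop.2) = (e₁.unop.2, e₂.unop.2) ↔ _
    constructor
    · intro h
      obtain ⟨g₁, hg₁⟩ := (exists_leftOp_map_eq_iff F f₁).2 (Prod.ext_iff.1 h).1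
      obtain ⟨g₂, hg₂⟩ := (exists_leftOp_map_eq_iff F f₂).2 (Prod.ext_iff.1 h).2
      exact ⟨(g₁, g₂), Prod.ext hg₁ hg₂⟩
    · rintro ⟨g, hg⟩
      exact Prod.ext ((exists_leftOp_map_eq_iff F f₁).1 ⟨g.1, (Prod.ext_iff.1 hg).1⟩)
        ((exists_leftOp_map_eq_iff F f₂).1 ⟨g.2, (Prod.ext_iff.1 hg).2⟩)

theorem nonempty_of_preservesTerminal
    [PreservesLimit (Functor.empty.{0} (A ⥤ Type u)) (weightedColim F)] :
    Nonempty F.Elementsᵒᵖ := by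
  obtain ⟨e, -, -⟩ := Types.jointly_surjective' (F := (π F).leftOp ⋙ ⊤_ (A ⥤ Type u))
    ((PreservesTerminal.iso (weightedColim F)).inv (Types.terminalIso.inv PUnit.unit))
  exact ⟨e⟩

end CategoryTheory.CategoryOfElements

open CategoryTheory.CategoryOfElements in
/-- A presheaf `F : Aᵒᵖ ⥤ Type` on a small category `A` is a sifted colimit of representables
if and only if the left Kan extension of `F` along the Yoneda embedding -- equivalently the
functor computing `F`-weighted colimits, `G ↦ F ⊗ G`, here realized as the colimit over the
(opposite of the) category of elements of `F` -- preserves finite products. -/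
theorem stmt6 {A : Type u} [SmallCategory A] (F : Aᵒᵖ ⥤ Type u) :
    (∃ D : Cat.{u, u}, IsSifted D ∧ ∃ G : D ⥤ A,
        Nonempty (colimit (G ⋙ yoneda) ≅ F)) ↔
      Nonempty (PreservesFiniteProducts
        ((Functor.whiskeringLeft F.Elementsᵒᵖ A (Type u)).obj (CategoryOfElements.π F).leftOp ⋙
          colim)) := by
  constructor
  · rintro ⟨D, hD, G, ⟨e⟩⟩
    have := isSifted_of_isSifted_colimit_iso F G e
    exact ⟨inferInstance⟩
  · rintro ⟨hT⟩
    have := nonempty_of_preservesTerminal F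
    have := isSiftedOrEmpty_of_preservesBinaryProducts F
    exact ⟨Cat.of F.Elementsᵒᵖ, show IsSifted F.Elementsᵒᵖ from ⟨⟩, (π F).leftOp,
      ⟨colimitLeftOpCompYonedaIso F⟩⟩
end

section
/- If A is a small category with finite coproducts, then every functor F : A^op → Set that preserves finite products (sends finite coproducts in A to finite products in Set) is a sifted colimit of representable functors; concretely, the category of elements of F has finite coproducts and hence is sifted, and F is the colimit of representables indexed by it. -/
/-!
Finite products in `Aᵒᵖ` are preserved by `F`, so the projection `F.Elements ⥤ Aᵒᵖ` creates
them; dually `F.Elementsᵒᵖ` has finite coproducts, and a nonempty category with binary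
coproducts is sifted. The colimit formula is the density of representables.
-/

open CategoryTheory Limits

universe u

namespace CategoryTheory

instance Limits.nonempty_of_hasTerminal {C : Type*} [Category C] [HasTerminal C] :
    Nonempty C :=
  ⟨⊤_ C⟩

instance CategoryOfElements.hasFiniteProducts {C : Type*} [Category C] [HasFiniteProducts C]
    (F : C ⥤ Type*) [PreservesFiniteProducts F] : HasFiniteProducts F.Elements :=
  ⟨fun _ => inferInstance⟩

noncomputable def Presheaf.colimitRepresentablesIso {C : Type u} [SmallCategory C]
    (P : Cᵒᵖ ⥤ Type u) : colimit ((CategoryOfElements.π P).leftOp ⋙ yoneda) ≅ P :=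
  HasColimit.isoOfNatIso (Functor.isoWhiskerLeft _ uliftYonedaIsoYoneda.{0}).symm ≪≫
    colimit.isoColimitCocone ⟨_, Presheaf.colimitOfRepresentable.{0} P⟩

end CategoryTheory

/-- If `A` is a small category with finite coproducts, every finite-product-preserving
presheaf `F : Aᵒᵖ ⥤ Type` is a sifted colimit of representables: the (opposite of the)
category of elements of `F` has finite coproducts, hence is sifted, and `F` is the colimit
of representables indexed by it. -/
theorem stmt7 {A : Type u} [SmallCategory A] [HasFiniteCoproducts A]
    (F : Aᵒᵖ ⥤ Type u) [PreservesFiniteProducts F] :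
    HasFiniteCoproducts (F.Elementsᵒᵖ) ∧ IsSifted (F.Elementsᵒᵖ) ∧
      Nonempty (colimit ((CategoryOfElements.π F).leftOp ⋙ yoneda) ≅ F) :=
  ⟨inferInstance, inferInstance, ⟨Presheaf.colimitRepresentablesIso F⟩⟩
end

section
/- Let F : A^op → Set be a weight, J : A → B and S : B → C functors, with A, B small. Then the F-weighted colimit of S∘J is isomorphic to the (Lan_J F)-weighted colimit of S, either side existing if the other does: F ⋆ (S∘J) ≅ (Lan_J F) ⋆ S. -/
open CategoryTheory Limits

universe v w u

/-!
With `η : F ⟶ J.op ⋙ Lan_J F` the unit, the functor `Φ : el F ⥤ el (Lan_J F)`,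
`(a, x) ↦ (J a, η x)`, satisfies `Φ ⋙ π = π ⋙ J.op`, and precomposing with the final functor
`Φ.op` does not change colimits; so it suffices that `Φ` is initial.
As `Lan_J F` is pointwise, `(Lan_J F) b` is the colimit of `F` over `J.op ↓ b`, and the comma
category `Φ ↓ (b, y)` receives a functor, surjective on objects, from the elements of that
colimit diagram lying over `y`. These form a connected category: two elements of a colimit of
sets agree exactly when a zigzag of the diagram joins them, and such a zigzag stays over `y`.
-/

namespace CategoryTheory

section TypeColimits

variable {I : Type*} [Category I] {K : I ⥤ Type w}

lemma Limits.Cocone.ι_eq_of_eqvGen_colimitTypeRel (c : Cocone K) {p q : K.Elements}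
    (h : Relation.EqvGen K.ColimitTypeRel p q) : c.ι.app p.1 p.2 = c.ι.app q.1 q.2 :=
  congrArg (K.descColimitType (K.coconeTypesEquiv.symm c)) ((K.ιColimitType_eq_iff _ _).2 h)

def Limits.Cocone.elementsFiber (c : Cocone K) (y : c.pt) : ObjectProperty K.Elements :=
  fun p => c.ι.app p.1 p.2 = y

variable {c : Cocone K}

lemma Limits.IsColimit.eqvGen_colimitTypeRel (hc : IsColimit c) {p q : K.Elements}
    (h : c.ι.app p.1 p.2 = c.ι.app q.1 q.2) : Relation.EqvGen K.ColimitTypeRel p q :=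
  (K.ιColimitType_eq_iff _ _).1
    (((Types.isColimit_iff_coconeTypesIsColimit c).1 ⟨hc⟩).bijective.1 h)

lemma Limits.IsColimit.isConnected_elementsFiber (hc : IsColimit c) (y : c.pt) :
    IsConnected (c.elementsFiber y).FullSubcategory := by
  obtain ⟨i, x, hx⟩ := Types.jointly_surjective_of_isColimit hc y
  have : Nonempty (c.elementsFiber y).FullSubcategory := ⟨⟨⟨i, x⟩, hx⟩⟩
  suffices h : ∀ p q : K.Elements, Relation.EqvGen K.ColimitTypeRel p q →
      ∀ (hp : c.elementsFiber y p) (hq : c.elementsFiber y q),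
        Zigzag (⟨p, hp⟩ : (c.elementsFiber y).FullSubcategory) ⟨q, hq⟩ from
    zigzag_isConnected fun p q => h p.obj q.obj
      (hc.eqvGen_colimitTypeRel (p.property.trans q.property.symm)) p.property q.property
  intro p q h
  induction h with
  | rel p q hpq =>
    obtain ⟨f, hf⟩ := hpq
    exact fun _ _ => Zigzag.of_hom (ObjectProperty.homMk ⟨f, hf.symm⟩)
  | refl => exact fun _ _ => Zigzag.refl _
  | symm p q _ ih => exact fun hq hp => (ih hp hq).symm
  | trans p q r hpq _ ih₁ ih₂ =>
    intro hp hr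
    have hq : c.elementsFiber y q := (c.ι_eq_of_eqvGen_colimitTypeRel hpq).symm.trans hp
    exact (ih₁ hp hq).trans (ih₂ hq hr)

end TypeColimits

lemma isConnected_of_surjective_obj {X Y : Type*} [Category X] [Category Y] [IsConnected X]
    (H : X ⥤ Y) (hH : Function.Surjective H.obj) : IsConnected Y := by
  have : Nonempty Y := ⟨H.obj (Classical.arbitrary X)⟩
  refine zigzag_isConnected fun y₁ y₂ => ?_
  obtain ⟨x₁, rfl⟩ := hH y₁
  obtain ⟨x₂, rfl⟩ := hH y₂
  exact zigzag_obj_of_zigzag H (isPreconnected_zigzag x₁ x₂)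

section LeftKanExtension

variable {C D : Type*} [Category C] [Category D] {L : C ⥤ D} {F : C ⥤ Type w}
  {G : D ⥤ Type w} (α : F ⟶ L ⋙ G)

def Functor.LeftExtension.elementsFiberToCostructuredArrow (e : G.Elements) :
    (((Functor.LeftExtension.mk G α).coconeAt e.1).elementsFiber e.2).FullSubcategory ⥤
      CostructuredArrow (CategoryOfElements.map α ⋙ Functor.Elements.precomp L G) e where
  obj p := CostructuredArrow.mk (Y := F.elementsMk p.obj.1.left p.obj.2) ⟨p.obj.1.hom, p.property⟩
  map f := CostructuredArrow.homMk ⟨f.hom.1.left, f.hom.2⟩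
    (CategoryOfElements.ext _ _ _ (CostructuredArrow.w f.hom.1))

lemma Functor.LeftExtension.elementsFiberToCostructuredArrow_obj_surjective (e : G.Elements) :
    Function.Surjective (Functor.LeftExtension.elementsFiberToCostructuredArrow α e).obj :=
  fun o => ⟨⟨⟨CostructuredArrow.mk o.hom.1, o.left.2⟩, o.hom.2⟩, (CostructuredArrow.eq_mk o).symm⟩

theorem initial_elementsMap_of_isPointwiseLeftKanExtension
    (hα : (Functor.LeftExtension.mk G α).IsPointwiseLeftKanExtension) :
    (CategoryOfElements.map α ⋙ Functor.Elements.precomp L G).Initial where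
  out e :=
    have := (hα e.1).isConnected_elementsFiber e.2
    isConnected_of_surjective_obj _
      (Functor.LeftExtension.elementsFiberToCostructuredArrow_obj_surjective α e)

end LeftKanExtension

end CategoryTheory

/-- `F ⋆ (S ∘ J) ≅ (Lan_J F) ⋆ S`, either side existing if the other does.  Here the
weighted colimit of a functor `R` by a weight `W : Aᵒᵖ ⥤ Type` is realized as the conical
colimit of `R` precomposed with the (opposite of the) projection from the category of
elements of `W`, and `Lan_J F` is the left Kan extension of `F` along `J.op`. -/
theorem stmt9 {A B : Type u} [SmallCategory A] [SmallCategory B]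
    {C : Type w} [Category.{v} C]
    (F : Aᵒᵖ ⥤ Type u) (J : A ⥤ B) (S : B ⥤ C) :
    (HasColimit ((CategoryOfElements.π F).leftOp ⋙ (J ⋙ S)) ↔
      HasColimit ((CategoryOfElements.π (J.op.leftKanExtension F)).leftOp ⋙ S)) ∧
    ∀ (h₁ : HasColimit ((CategoryOfElements.π F).leftOp ⋙ (J ⋙ S)))
      (h₂ : HasColimit ((CategoryOfElements.π (J.op.leftKanExtension F)).leftOp ⋙ S)),
      Nonempty (@colimit _ _ _ _ ((CategoryOfElements.π F).leftOp ⋙ (J ⋙ S)) h₁ ≅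
        @colimit _ _ _ _ ((CategoryOfElements.π (J.op.leftKanExtension F)).leftOp ⋙ S) h₂) := by
  let Φ := CategoryOfElements.map (J.op.leftKanExtensionUnit F) ⋙
    Functor.Elements.precomp J.op (J.op.leftKanExtension F)
  have : Φ.Initial := initial_elementsMap_of_isPointwiseLeftKanExtension _
    (Functor.isPointwiseLeftKanExtensionOfIsLeftKanExtension _ (J.op.leftKanExtensionUnit F))
  let e : Φ.op ⋙ (CategoryOfElements.π (J.op.leftKanExtension F)).leftOp ⋙ S ≅
      (CategoryOfElements.π F).leftOp ⋙ J ⋙ S := Iso.refl _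
  refine ⟨?_, fun _ _ => ⟨HasColimit.isoOfNatIso e.symm ≪≫ Functor.Final.colimitIso Φ.op _⟩⟩
  rw [← hasColimit_iff_of_iso e]
  exact Functor.Final.hasColimit_comp_iff Φ.op
end

section
/- Let A and B be small categories with finite products, G : A → B any functor, and M : A → Set a finite-product-preserving functor. Then the left Kan extension Lan_G M : B → Set preserves finite products. -/
/-!
Write `M` as the colimit of the corepresentables `A(a, -)` over the opposite of its category of
elements. Since `Lan_G` is a left adjoint and sends `A(a, -)` to `B(G a, -)`, the functor `Lan_G M`
is the colimit of the corepresentables `B(G a, -)`, computed pointwise. Each of these preserves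
finite products, and the indexing category is sifted: as `M` preserves finite products, its
category of elements has finite products. Sifted colimits commute with finite products in `Type`.
-/

open CategoryTheory Limits Opposite

universe u v w u₁ u₂

namespace CategoryTheory

theorem CategoryOfElements.isSifted_op {A : Type u₁} [Category.{v} A] [HasFiniteProducts A]
    (M : A ⥤ Type w) [PreservesFiniteProducts M] : IsSifted M.Elementsᵒᵖ :=
  have : Nonempty M.Elementsᵒᵖ := ⟨op (⊤_ M.Elements)⟩
  inferInstance

section Corepresentable

variable {A : Type u₁} {B : Type u₂} [Category.{v} A] [Category.{v} B] (G : A ⥤ B)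

def coyonedaMap (X : A) : coyoneda.obj (op X) ⟶ G ⋙ coyoneda.obj (op (G.obj X)) where
  app _ := ↾fun f ↦ G.map f

instance (X : A) (Y : G.LeftExtension (coyoneda.obj (op X))) :
    Unique (Functor.LeftExtension.mk _ (coyonedaMap G X) ⟶ Y) where
  default := StructuredArrow.homMk (coyonedaEquiv.symm (Y.hom.app X (𝟙 X))) (by
    ext a f
    change Y.right.map (G.map f) (Y.hom.app X (𝟙 X)) = _
    simpa using (Y.hom.naturality_apply f (𝟙 X)).symm)
  uniq φ := by
    have h := ConcreteCategory.congr_hom (congr_app (StructuredArrow.w φ) X) (𝟙 X)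
    change φ.right.app (G.obj X) (G.map (𝟙 X)) = Y.hom.app X (𝟙 X) at h
    ext1
    apply coyonedaEquiv.injective
    change φ.right.app (G.obj X) (𝟙 _) = Y.right.map (𝟙 _) (Y.hom.app X (𝟙 X))
    rw [← h, G.map_id, Functor.map_id_apply]

instance (X : A) : (coyoneda.obj (op (G.obj X))).IsLeftKanExtension (coyonedaMap G X) :=
  ⟨⟨IsInitial.ofUnique _⟩⟩

instance Functor.isCorepresentable_leftKanExtension (F : A ⥤ Type v) [F.IsCorepresentable]
    [G.HasLeftKanExtension F] : (G.leftKanExtension F).IsCorepresentable :=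
  corepresentable_of_natIso _ (leftKanExtensionUniqueOfIso (G.leftKanExtension F)
    (G.leftKanExtensionUnit F) F.coreprW.symm _ (coyonedaMap G F.coreprX)).symm

end Corepresentable

theorem Functor.preservesFiniteProducts_flip {J : Type*} [Category J] {B : Type*} [Category B]
    {D : Type*} [Category D] (F : J ⥤ B ⥤ D) [∀ j, PreservesFiniteProducts (F.obj j)] :
    PreservesFiniteProducts F.flip where
  preserves _ := preservesLimitsOfShape_of_evaluation _ _ fun j ↦
    preservesLimitsOfShape_of_natIso (flipCompEvaluation F j).symm

theorem preservesFiniteProducts_leftKanExtension {A : Type u} {B : Type*} [SmallCategory A]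
    [Category.{u} B] [HasFiniteProducts A] (G : A ⥤ B) (M : A ⥤ Type u)
    [PreservesFiniteProducts M] : PreservesFiniteProducts (G.leftKanExtension M) := by
  have := CategoryOfElements.isSifted_op M
  have := (G.lanAdjunction (Type u)).leftAdjoint_preservesColimits
  -- `K` sends an element `x : M.obj a` to the corepresentable functor `A(a, -)`.
  let K := (CategoryOfElements.π M).op ⋙ shrinkYoneda.{u}.flip
  have hK :=
    isColimitOfPreserves G.lan (Functor.Elements.isColimitCoconeπOpCompShrinkYonedaFlip M)
  have e : G.leftKanExtension M ≅ (K ⋙ G.lan).flip ⋙ colim :=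
    hK.coconePointUniqueUpToIso (colimit.isColimit _) ≪≫ colimitIsoFlipCompColim _
  have (c : M.Elementsᵒᵖ) : PreservesFiniteProducts ((K ⋙ G.lan).obj c) :=
    have : (K.obj c).IsCorepresentable := Functor.Elements.isCorepresentable_of_hasInitial
      (shrinkYoneda.{u}.flip.obj (op c.unop.1))
    inferInstanceAs (PreservesFiniteProducts (G.leftKanExtension (K.obj c)))
  have := Functor.preservesFiniteProducts_flip (K ⋙ G.lan)
  exact ⟨fun _ ↦ preservesLimitsOfShape_of_natIso e.symm⟩

end CategoryTheory

theorem stmt11_general {A B : Type u} [SmallCategory A] [SmallCategory B]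
    [HasFiniteProducts A]
    (G : A ⥤ B) (M : A ⥤ Type u) [PreservesFiniteProducts M] :
    Nonempty (PreservesFiniteProducts (G.leftKanExtension M)) :=
  ⟨preservesFiniteProducts_leftKanExtension G M⟩

/-- If `A` and `B` are small categories with finite products, `G : A ⥤ B` is any functor,
and `M : A ⥤ Type` preserves finite products, then `Lan_G M : B ⥤ Type` preserves finite
products. -/
theorem stmt11 {A B : Type u} [SmallCategory A] [SmallCategory B]
    [HasFiniteProducts A] [HasFiniteProducts B]
    (G : A ⥤ B) (M : A ⥤ Type u) [PreservesFiniteProducts M] :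
    Nonempty (PreservesFiniteProducts (G.leftKanExtension M)) :=
  stmt11_general G M
end

section
/- In the presheaf category [C^op, Set], an object is a retract of a finite coproduct of representables if and only if it is a finite coproduct of retracts of representables. -/
open CategoryTheory Limits

universe u v w

/-!
Coproducts of presheaves are computed pointwise, as `Σ j, yoneda.obj (c j)`. A map out of a
representable lands in a single summand, so the idempotent `e = r ≫ i` sends the summand `j`
into a single summand `σ j`. If `i x` lies in the summand `j`, then so does `i x = e (i x)`,
hence `σ j = j`. Thus `P` is partitioned by the preimages `P_j` of the summands fixed by `σ`,
so it is their coproduct, and `i` and `r` restrict to a retraction of `yoneda.obj (c j)` onto `P_j`.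
-/

namespace CategoryTheory

open Opposite

@[simps]
noncomputable def Retract.sigmaMap {D : Type*} [Category D] {β : Type*} {X Y : β → D}
    [HasCoproduct X] [HasCoproduct Y] (h : ∀ b, Retract (X b) (Y b)) : Retract (∐ X) (∐ Y) where
  i := Limits.Sigma.map fun b => (h b).i
  r := Limits.Sigma.map fun b => (h b).r
  retract := by simp [Limits.Sigma.map_comp_map]

namespace FunctorToTypes

section

variable {C : Type*} [Category C]

section sigma

variable {J : Type} (F : J → C ⥤ Type w)

@[simps obj map]
def sigma : C ⥤ Type w where
  obj a := Σ j, (F j).obj a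
  map f := ↾fun x => ⟨x.1, (F x.1).map f x.2⟩

@[simps]
def sigma.ι (j : J) : F j ⟶ sigma F where
  app _ := ↾fun x => ⟨j, x⟩

instance (j : J) : Mono (sigma.ι F j) :=
  (NatTrans.mono_iff_mono_app _).2 fun _ =>
    (mono_iff_injective _).2 fun _ _ h => eq_of_heq (Sigma.mk.inj h).2

variable {F}

@[simps]
def sigma.desc {G : C ⥤ Type w} (τ : ∀ j, F j ⟶ G) : sigma F ⟶ G where
  app a := ↾fun x => (τ x.1).app a x.2
  naturality _ _ f := by ext ⟨j, x⟩; exact NatTrans.naturality_apply (τ j) f x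

lemma mem_range_sigmaι_iff {j : J} {a : C} {t : (sigma F).obj a} :
    t ∈ (Subfunctor.range (sigma.ι F j)).obj a ↔ t.1 = j := by
  constructor
  · rintro ⟨x, rfl⟩
    rfl
  · obtain ⟨k, x⟩ := t
    rintro rfl
    exact ⟨x, rfl⟩

lemma mem_preimage_range_sigmaι_iff {P : C ⥤ Type w} {i : P ⟶ sigma F} {j : J} {a : C}
    {x : P.obj a} :
    x ∈ ((Subfunctor.range (sigma.ι F j)).preimage i).obj a ↔ (i.app a x).1 = j :=
  mem_range_sigmaι_iff

variable (F)

def sigmaCofan : Cofan F := Cofan.mk (sigma F) (sigma.ι F)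

def sigmaCofanIsColimit : IsColimit (sigmaCofan F) :=
  Cofan.IsColimit.mk _ (fun s => sigma.desc s.inj) (fun _ _ => rfl) fun s m hm => by
    ext a ⟨j, x⟩
    exact ConcreteCategory.congr_hom (NatTrans.congr_app (hm j) a) x

noncomputable def sigmaIso : ∐ F ≅ sigma F :=
  colimit.isoColimitCocone ⟨_, sigmaCofanIsColimit F⟩

end sigma

noncomputable def isoSigmaOfPartition {P : C ⥤ Type w} {K : Type} (A : K → Subfunctor P)
    (hA : ∀ a (x : P.obj a), ∃! k, x ∈ (A k).obj a) : P ≅ sigma fun k => (A k).toFunctor :=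
  NatIso.ofComponents
    (fun a => Equiv.toIso
      { toFun x := ⟨(hA a x).exists.choose, x, (hA a x).exists.choose_spec⟩
        invFun y := y.2
        left_inv _ := rfl
        right_inv y :=
          Sigma.subtype_ext ((hA a y.2).unique (hA a y.2).exists.choose_spec y.2.2) rfl })
    fun {a b} f => by
      ext x
      exact Sigma.subtype_ext ((hA b _).unique (hA b _).exists.choose_spec
        ((A _).map f (hA a x).exists.choose_spec)) rfl

noncomputable def retractPreimageRange {P Y Z : C ⥤ Type w} (m : Z ⟶ Y) [Mono m]
    (i : P ⟶ Y) (r : Y ⟶ P) (hir : i ≫ r = 𝟙 P)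
    (hm : Subfunctor.range (m ≫ r ≫ i) ≤ Subfunctor.range m) :
    Retract ((Subfunctor.range m).preimage i).toFunctor Z where
  i := (Subfunctor.range m).fromPreimage i ≫ inv (Subfunctor.toRange m)
  r := Subfunctor.lift (m ≫ r) <| by
    rwa [← Subfunctor.image_le_iff, ← Subfunctor.range_comp, Category.assoc]
  retract := by
    have hm' : inv (Subfunctor.toRange m) ≫ m = (Subfunctor.range m).ι := by
      rw [IsIso.inv_comp_eq, Subfunctor.toRange_ι]
    rw [← cancel_mono (Subfunctor.ι _), Category.assoc, Category.assoc, Subfunctor.lift_ι,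
      reassoc_of% hm', Subfunctor.fromPreimage_ι_assoc, hir, Category.comp_id, Category.id_comp]

end

section yoneda

variable {C : Type*} [Category.{v} C] {J : Type} {c : J → C}

lemma fst_app_eq_fst_yonedaEquiv {J' : Type} {G : J' → Cᵒᵖ ⥤ Type v} {d : C}
    (f : yoneda.obj d ⟶ sigma G) {X : C} (g : X ⟶ d) :
    (f.app (op X) g).1 = (yonedaEquiv f).1 := by
  rw [← map_yonedaEquiv f g]
  rfl

lemma range_sigmaι_comp_le {φ : sigma (yoneda.obj ∘ c) ⟶ sigma (yoneda.obj ∘ c)} {j : J}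
    (h : (yonedaEquiv (sigma.ι (yoneda.obj ∘ c) j ≫ φ)).1 = j) :
    Subfunctor.range (sigma.ι _ j ≫ φ) ≤ Subfunctor.range (sigma.ι (yoneda.obj ∘ c) j) := by
  rw [Subfunctor.le_def]
  intro X t ⟨g, hg⟩
  subst hg
  rw [mem_range_sigmaι_iff]
  exact (fst_app_eq_fst_yonedaEquiv _ g).trans h

lemma fst_yonedaEquiv_sigmaι_comp_retraction {P : Cᵒᵖ ⥤ Type v}
    (i : P ⟶ sigma (yoneda.obj ∘ c)) (r : sigma (yoneda.obj ∘ c) ⟶ P) (hir : i ≫ r = 𝟙 P)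
    {X : Cᵒᵖ} (x : P.obj X) :
    (yonedaEquiv (sigma.ι (yoneda.obj ∘ c) (i.app X x).1 ≫ r ≫ i)).1 = (i.app X x).1 := by
  have hx : r.app X (i.app X x) = x := ConcreteCategory.congr_hom (NatTrans.congr_app hir X) x
  rw [← fst_app_eq_fst_yonedaEquiv _ (i.app X x).2]
  change (i.app X (r.app X (i.app X x))).1 = _
  rw [hx]

theorem exists_iso_sigma_retracts_of_retract_sigma_yoneda [Finite J] {P : Cᵒᵖ ⥤ Type v}
    (h : Retract P (sigma (yoneda.obj ∘ c))) :
    ∃ (m : ℕ) (Q : Fin m → Cᵒᵖ ⥤ Type v),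
      (∀ k, ∃ d, Nonempty (Retract (Q k) (yoneda.obj d))) ∧ Nonempty (P ≅ ∐ Q) := by
  -- `(yonedaEquiv (sigma.ι _ j ≫ h.r ≫ h.i)).1` is the summand `σ j` into which `r ≫ i` maps `j`.
  let S := {j // (yonedaEquiv (sigma.ι (yoneda.obj ∘ c) j ≫ h.r ≫ h.i)).1 = j}
  let ρ : Fin (Nat.card S) ≃ S := (Finite.equivFin S).symm
  let A k := (Subfunctor.range (sigma.ι (yoneda.obj ∘ c) (ρ k).1)).preimage h.i
  have hA : ∀ X (x : P.obj X), ∃! k, x ∈ (A k).obj X := by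
    intro X x
    refine ⟨ρ.symm ⟨_, fst_yonedaEquiv_sigmaι_comp_retraction h.i h.r h.retract x⟩,
      mem_preimage_range_sigmaι_iff.2 (by simp), fun k hk => ?_⟩
    rw [Equiv.eq_symm_apply]
    exact Subtype.ext (mem_preimage_range_sigmaι_iff.1 hk).symm
  exact ⟨_, fun k => (A k).toFunctor,
    fun k => ⟨_, ⟨retractPreimageRange _ h.i h.r h.retract (range_sigmaι_comp_le (ρ k).2)⟩⟩,
    ⟨isoSigmaOfPartition A hA ≪≫ (sigmaIso _).symm⟩⟩

end yoneda

end FunctorToTypes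

end CategoryTheory

open FunctorToTypes in
/-- In a presheaf category `[Cᵒᵖ, Type]`, an object is a retract of a finite coproduct of
representables if and only if it is a finite coproduct of retracts of representables. -/
theorem stmt12 {C : Type u} [SmallCategory C] (P : Cᵒᵖ ⥤ Type u) :
    (∃ (n : ℕ) (c : Fin n → C) (i : P ⟶ ∐ fun j => yoneda.obj (c j))
        (r : (∐ fun j => yoneda.obj (c j)) ⟶ P), i ≫ r = 𝟙 P) ↔
      (∃ (n : ℕ) (Q : Fin n → (Cᵒᵖ ⥤ Type u)),
        (∀ j, ∃ (c : C) (i : Q j ⟶ yoneda.obj c) (r : yoneda.obj c ⟶ Q j),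
          i ≫ r = 𝟙 (Q j)) ∧
        Nonempty (P ≅ ∐ Q)) := by
  constructor
  · rintro ⟨n, c, i, r, hir⟩
    obtain ⟨m, Q, hQ, hP⟩ := exists_iso_sigma_retracts_of_retract_sigma_yoneda
      ((Retract.mk i r hir).trans (sigmaIso _).retract)
    refine ⟨m, Q, fun k => ?_, hP⟩
    obtain ⟨d, ⟨R⟩⟩ := hQ k
    exact ⟨d, R.i, R.r, R.retract⟩
  · rintro ⟨n, Q, hQ, ⟨e⟩⟩
    choose c i r hir using hQ
    let R := e.retract.trans (Retract.sigmaMap fun j => ⟨i j, r j, hir j⟩)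
    exact ⟨n, c, R.i, R.r, R.retract⟩
end

section
/- If idempotents split in a small category C, then every retract in [C^op, Set] of a finite coproduct of representable presheaves is itself isomorphic to a finite coproduct of representable presheaves. -/
open CategoryTheory Limits Opposite

universe u

/-! Maps from a representable into a coproduct of representables factor through exactly one
summand, so an idempotent `e` on `∐ⱼ y(cⱼ)` sends each summand into a single summand, and
idempotence forces that target summand `m` to be sent into itself, by some idempotent `gₘ` of `cₘ`.
Hence `e = a ≫ b` factors through the coproduct over these self-mapped summands, with
`b ≫ a = ∐ y(gₘ)`. Splitting each `gₘ` in `C` splits `b ≫ a` through a coproduct of representables,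
and splittings of `a ≫ b` and `b ≫ a` are isomorphic. -/

namespace CategoryTheory

namespace Retract

variable {C : Type*} [Category* C]

def isoOfCompEq {P Q X Y : C} (h₁ : Retract P X) (h₂ : Retract Q Y)
    (a : X ⟶ Y) (b : Y ⟶ X) (ha : h₁.r ≫ h₁.i = a ≫ b) (hb : h₂.r ≫ h₂.i = b ≫ a) : P ≅ Q where
  hom := h₁.i ≫ a ≫ h₂.r
  inv := h₂.i ≫ b ≫ h₁.r
  hom_inv_id := calc
    _ = h₁.i ≫ (a ≫ (h₂.r ≫ h₂.i) ≫ b) ≫ h₁.r := by simp only [Category.assoc]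
    _ = h₁.i ≫ (h₁.r ≫ h₁.i) ≫ (h₁.r ≫ h₁.i) ≫ h₁.r := by rw [hb, ha]; simp only [Category.assoc]
    _ = 𝟙 P := by simp
  inv_hom_id := calc
    _ = h₂.i ≫ (b ≫ (h₁.r ≫ h₁.i) ≫ a) ≫ h₂.r := by simp only [Category.assoc]
    _ = h₂.i ≫ (h₂.r ≫ h₂.i) ≫ (h₂.r ≫ h₂.i) ≫ h₂.r := by rw [ha, hb]; simp only [Category.assoc]
    _ = 𝟙 Q := by simp

@[simps]
noncomputable def sigma {ι : Type*} {P X : ι → C} [HasCoproduct P] [HasCoproduct X]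
    (h : ∀ j, Retract (P j) (X j)) : Retract (∐ P) (∐ X) where
  i := Limits.Sigma.map fun j => (h j).i
  r := Limits.Sigma.map fun j => (h j).r

theorem exists_r_comp_i_eq [IsIdempotentComplete C] {X : C} (p : X ⟶ X) (hp : p ≫ p = p) :
    ∃ (Y : C) (h : Retract Y X), h.r ≫ h.i = p := by
  obtain ⟨Y, i, r, hir, hri⟩ := IsIdempotentComplete.idempotents_split X p hp
  exact ⟨Y, ⟨i, r, hir⟩, hri⟩

end Retract

variable {C : Type u} [SmallCategory C] {ι : Type*} [Small.{u} ι] (c : ι → C)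

theorem bijective_yoneda_map_comp_ι (a : C) : Function.Bijective
    fun p : Σ j, a ⟶ c j => yoneda.map p.2 ≫ Sigma.ι (fun j => yoneda.obj (c j)) p.1 := by
  have := yonedaEquiv.symm.bijective.comp <|
    (sigmaObjIso (fun j => yoneda.obj (c j)) (op a)).toEquiv.symm.bijective.comp <|
    (Cofan.nonempty_isColimit_iff_bijective_fromSigma _).1
      ⟨coproductIsCoproduct fun j => (yoneda.obj (c j)).obj (op a)⟩
  convert this using 1
  funext ⟨j, f⟩
  apply yonedaEquiv.injective
  simp only [Function.comp_apply, Equiv.apply_symm_apply, yonedaEquiv_comp, yonedaEquiv_yoneda_map]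
  rw [← ι_comp_sigmaObjIso_inv]
  rfl

theorem exists_yoneda_map_comp_ι {a : C} (x : yoneda.obj a ⟶ ∐ fun j => yoneda.obj (c j)) :
    ∃ (j : ι) (f : a ⟶ c j), yoneda.map f ≫ Sigma.ι (fun j => yoneda.obj (c j)) j = x := by
  obtain ⟨⟨j, f⟩, hf⟩ := (bijective_yoneda_map_comp_ι c a).2 x
  exact ⟨j, f, hf⟩

theorem sigma_mk_eq_of_yoneda_map_comp_ι_eq {a : C} {j j' : ι} {f : a ⟶ c j} {f' : a ⟶ c j'}
    (h : yoneda.map f ≫ Sigma.ι (fun j => yoneda.obj (c j)) j =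
      yoneda.map f' ≫ Sigma.ι (fun j => yoneda.obj (c j)) j') :
    (⟨j, f⟩ : Σ j, a ⟶ c j) = ⟨j', f'⟩ :=
  (bijective_yoneda_map_comp_ι c a).1 h

section Idempotent

variable {c} (e : (∐ fun j => yoneda.obj (c j)) ⟶ ∐ fun j => yoneda.obj (c j))

def fixedSummands : Set ι :=
  {j | ∃ g : c j ⟶ c j, yoneda.map g ≫ Sigma.ι (fun j => yoneda.obj (c j)) j =
    Sigma.ι (fun j => yoneda.obj (c j)) j ≫ e}

variable {e} (he : e ≫ e = e)
include he

theorem exists_mem_fixedSummands (j : ι) : ∃ m ∈ fixedSummands e, ∃ f : c j ⟶ c m,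
    yoneda.map f ≫ Sigma.ι (fun j => yoneda.obj (c j)) m =
      Sigma.ι (fun j => yoneda.obj (c j)) j ≫ e := by
  obtain ⟨m, f, hf⟩ := exists_yoneda_map_comp_ι c (Sigma.ι (fun j => yoneda.obj (c j)) j ≫ e)
  obtain ⟨m', f', hf'⟩ := exists_yoneda_map_comp_ι c (Sigma.ι (fun j => yoneda.obj (c j)) m ≫ e)
  have : (⟨m', f ≫ f'⟩ : Σ m, c j ⟶ c m) = ⟨m, f⟩ := by
    apply sigma_mk_eq_of_yoneda_map_comp_ι_eq
    rw [Functor.map_comp, Category.assoc, hf', reassoc_of% hf, he, hf]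
  obtain rfl : m' = m := congrArg Sigma.fst this
  exact ⟨_, ⟨f', hf'⟩, f, hf⟩

theorem idempotent_of_yoneda_map_comp_ι_eq {j : ι} {g : c j ⟶ c j}
    (hg : yoneda.map g ≫ Sigma.ι (fun j => yoneda.obj (c j)) j =
      Sigma.ι (fun j => yoneda.obj (c j)) j ≫ e) : g ≫ g = g := by
  have := sigma_mk_eq_of_yoneda_map_comp_ι_eq c (f := g ≫ g) (f' := g) (by
    rw [Functor.map_comp, Category.assoc, hg, reassoc_of% hg, he])
  exact eq_of_heq (Sigma.mk.inj this).2

theorem exists_comp_eq_and_comp_eq_sigma_map : ∃ (g : ∀ j : fixedSummands e, c j ⟶ c j)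
    (a : (∐ fun j => yoneda.obj (c j)) ⟶ ∐ fun j : fixedSummands e => yoneda.obj (c j))
    (b : (∐ fun j : fixedSummands e => yoneda.obj (c j)) ⟶ ∐ fun j => yoneda.obj (c j)),
    a ≫ b = e ∧ b ≫ a = Limits.Sigma.map (fun j => yoneda.map (g j)) ∧ ∀ j, g j ≫ g j = g j := by
  choose g hg using fun j : fixedSummands e => j.2
  choose m hm f hf using exists_mem_fixedSummands he
  let a := Sigma.map' (g := fun j : fixedSummands e => yoneda.obj (c j))
    (fun j => ⟨m j, hm j⟩) fun j => yoneda.map (f j)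
  let b := Sigma.map' (f := fun j : fixedSummands e => yoneda.obj (c j))
    (g := fun j => yoneda.obj (c j)) Subtype.val fun j => 𝟙 _
  have hab : a ≫ b = e := by
    ext j
    simp [a, b, hf]
  have : Mono b :=
    MonoCoprod.mono_map'_of_injective (fun j => yoneda.obj (c j)) _ Subtype.val_injective
  refine ⟨g, a, b, hab, ?_, fun j => idempotent_of_yoneda_map_comp_ι_eq he (hg j)⟩
  rw [← cancel_mono b, Category.assoc, hab]
  ext j
  simp [b, hg]

end Idempotent

theorem exists_iso_sigma_yoneda_of_retract [IsIdempotentComplete C] {P : Cᵒᵖ ⥤ Type u}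
    (hP : Retract P (∐ fun j => yoneda.obj (c j))) :
    ∃ (J : Set ι) (d : J → C), Nonempty (P ≅ ∐ fun j : J => yoneda.obj (d j)) := by
  obtain ⟨g, a, b, hab, hba, hg⟩ :=
    exists_comp_eq_and_comp_eq_sigma_map (e := hP.r ≫ hP.i) (by simp)
  choose d hd hdg using fun j => Retract.exists_r_comp_i_eq (g j) (hg j)
  let hD := Retract.sigma fun j => (hd j).map yoneda
  refine ⟨_, d, ⟨hP.isoOfCompEq hD a b hab.symm ?_⟩⟩
  simp only [hba, hD, Retract.sigma_r, Retract.sigma_i, Limits.Sigma.map_comp_map, Retract.map_r,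
    Retract.map_i, ← Functor.map_comp, hdg]

end CategoryTheory

/-- If idempotents split in a small category `C`, then every retract in `[Cᵒᵖ, Type]` of a
finite coproduct of representable presheaves is itself isomorphic to a finite coproduct of
representables. -/
theorem stmt13 {C : Type u} [SmallCategory C] [IsIdempotentComplete C]
    (P : Cᵒᵖ ⥤ Type u)
    (h : ∃ (n : ℕ) (c : Fin n → C) (i : P ⟶ ∐ fun j => yoneda.obj (c j))
      (r : (∐ fun j => yoneda.obj (c j)) ⟶ P), i ≫ r = 𝟙 P) :
    ∃ (n : ℕ) (c : Fin n → C), Nonempty (P ≅ ∐ fun j => yoneda.obj (c j)) := by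
  obtain ⟨n, c, i, r, hir⟩ := h
  obtain ⟨J, d, ⟨φ⟩⟩ := exists_iso_sigma_yoneda_of_retract c ⟨i, r, hir⟩
  have := Fintype.ofFinite J
  let ε := Fintype.equivFin J
  exact ⟨_, d ∘ ε.symm, ⟨φ ≪≫ (Sigma.whiskerEquiv ε.symm fun _ => Iso.refl _).symm⟩⟩
end

section
/- In the category Gph of directed graphs, the terminal object 1 (one vertex with a loop) is not strongly finitely presentable: the functor Hom(1, −) : Gph → Set fails to preserve the reflexive coequalizer identifying the source and target of the free-living edge E. -/
open CategoryTheory Limits WalkingParallelPair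

/-- The category of directed graphs: presheaves on the walking parallel pair. -/
abbrev Gph := WalkingParallelPairᵒᵖ ⥤ Type

/-- The free-living edge. -/
abbrev E : Gph := yoneda.obj one

/-- The free-living vertex. -/
abbrev V : Gph := yoneda.obj zero

/-- The map `E + V ⟶ E` which is the identity on `E` and picks out the source on `V`. -/
noncomputable def f : E ⨿ V ⟶ E :=
  coprod.desc (𝟙 E) (yoneda.map WalkingParallelPairHom.left)

/-- The map `E + V ⟶ E` which is the identity on `E` and picks out the target on `V`. -/
noncomputable def g : E ⨿ V ⟶ E :=
  coprod.desc (𝟙 E) (yoneda.map WalkingParallelPairHom.right)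

/-!
A map from the one-loop graph `1` to `E` would send the loop to an edge whose source and target
coincide, but the only edge of `E` has distinct endpoints; so `Hom(1, E) = ∅`, and then also
`Hom(1, E + V) = ∅`, since composing with `f` lands in `Hom(1, E)`. On the other hand a cofork of
`f, g` is exactly an edge whose endpoints have been identified, i.e. a loop, so the coequalizer
is `1`. Were it preserved by `Hom(1, −)`, the nonempty set `Hom(1, 1)` would be a colimit of a
diagram of empty sets.
-/

open Opposite WalkingParallelPairHom

abbrev loopGraph : Gph := (Functor.const _).obj PUnit

def isTerminalLoopGraph : IsTerminal loopGraph :=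
  Functor.isTerminalConst _ Types.isTerminalPUnit

lemma walkingParallelPairHom_one_one_eq_id (e : WalkingParallelPairHom one one) : e = 𝟙 one := by
  cases e; rfl

instance : IsEmpty (loopGraph ⟶ E) := by
  refine ⟨fun h => ?_⟩
  have hl : h.app (op zero) PUnit.unit = left ≫ h.app (op one) PUnit.unit :=
    NatTrans.naturality_apply h (Quiver.Hom.op left) PUnit.unit
  have hr : h.app (op zero) PUnit.unit = right ≫ h.app (op one) PUnit.unit :=
    NatTrans.naturality_apply h (Quiver.Hom.op right) PUnit.unit
  have h_left_eq_right := hl.symm.trans hr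
  rw [walkingParallelPairHom_one_one_eq_id (h.app (op one) PUnit.unit)] at h_left_eq_right
  cases h_left_eq_right

instance : IsEmpty ((⊤_ Gph) ⟶ E) :=
  ⟨fun h => isEmptyElim ((terminalIsoIsTerminal isTerminalLoopGraph).inv ≫ h)⟩

lemma cofork_π_app_left_eq_right (s : Cofork f g) :
    s.π.app (op zero) left = s.π.app (op zero) right := by
  have h : yoneda.map left ≫ s.π = yoneda.map right ≫ s.π := by
    simpa only [f, g, coprod.inr_desc_assoc] using coprod.inr ≫= s.condition
  have := congrArg yonedaEquiv h
  rwa [yonedaEquiv_comp, yonedaEquiv_comp, yonedaEquiv_yoneda_map, yonedaEquiv_yoneda_map] at this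

lemma cofork_π_app_eq (s : Cofork f g) {c : WalkingParallelPair}
    (e e' : WalkingParallelPairHom c one) : s.π.app (op c) e = s.π.app (op c) e' := by
  have := cofork_π_app_left_eq_right s
  cases e <;> cases e' <;> first | rfl | exact this | exact this.symm

def homToOne : ∀ c : WalkingParallelPair, c ⟶ one
  | zero => left
  | one => 𝟙 one

noncomputable def loopCofork : Cofork f g :=
  Cofork.ofπ (isTerminalLoopGraph.from E) (isTerminalLoopGraph.hom_ext _ _)

instance : Epi loopCofork.π := by
  have (c : WalkingParallelPairᵒᵖ) : Epi (loopCofork.π.app c) :=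
    (epi_iff_surjective _).2 fun _ => ⟨homToOne c.unop, rfl⟩
  exact NatTrans.epi_of_epi_app _

noncomputable def loopCofork.desc (s : Cofork f g) : loopGraph ⟶ s.pt where
  app c := TypeCat.ofHom fun _ => s.π.app c (homToOne c.unop)
  naturality c d φ := by
    ext
    exact (cofork_π_app_eq s _ _).trans (NatTrans.naturality_apply s.π φ _)

noncomputable def isColimitLoopCofork : IsColimit loopCofork :=
  Cofork.IsColimit.mk _ loopCofork.desc
    (fun s => by ext c e; exact cofork_π_app_eq s _ _)
    (fun s m hm => (cancel_epi _).1 (hm.trans (by ext c e; exact (cofork_π_app_eq s _ _).symm)))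

/-- The pair `f, g : E + V ⟶ E` is reflexive, its coequalizer is the terminal graph `1`
(one vertex with a loop), and `Hom(1, −) : Gph ⥤ Type` fails to preserve this reflexive
coequalizer; hence the terminal graph is not strongly finitely presentable. -/
theorem stmt15 :
    IsReflexivePair f g ∧
    Nonempty (colimit (parallelPair f g) ≅ ⊤_ Gph) ∧
    ¬ Nonempty (PreservesColimit (parallelPair f g)
        (coyoneda.obj (Opposite.op (⊤_ Gph)))) := by
  have coeq_iso : colimit (parallelPair f g) ≅ ⊤_ Gph :=
    colimit.isoColimitCocone ⟨_, isColimitLoopCofork⟩ ≪≫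
      (terminalIsoIsTerminal isTerminalLoopGraph).symm
  refine ⟨IsReflexivePair.mk' coprod.inl (coprod.inl_desc _ _) (coprod.inl_desc _ _),
    ⟨coeq_iso⟩, ?_⟩
  rintro ⟨_⟩
  obtain ⟨j, x, -⟩ := Types.jointly_surjective _
    (isColimitOfPreserves (coyoneda.obj (op (⊤_ Gph))) (colimit.isColimit _)) coeq_iso.inv
  cases j
  · exact isEmptyElim (x ≫ f)
  · exact isEmptyElim (show (⊤_ Gph) ⟶ E from x)
end

section
/- Set is the free completion of the category of finite sets under sifted colimits as well as under filtered colimits; consequently, an endofunctor of Set preserves filtered colimits if and only if it preserves sifted colimits. -/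
/-!
A functor `F` on sets preserving filtered colimits is determined by its values on finite sets:
every element of `F X` comes from `F S` for a finite `S ⊆ X`, and two elements of `F S` that agree
in `F X` already agree in `F T` for a finite `T` with `S ⊆ T ⊆ X`. For a sifted diagram `G` and a
finite set `k`, the functor `Hom(k, -)` preserves the colimit of `G`, because sifted colimits of
sets commute with finite products: every map `k → colim G` lifts to some `G d`, and two lifts that
agree in `colim G` already agree in `colim_d Hom(k, G d)`. Combining the two facts, every element
of `F (colim G)` lifts to `colim (G ⋙ F)`, and two lifts of the same element are identified there.
-/

open CategoryTheory Limits Opposite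

universe u

namespace CategoryTheory.Limits

variable {D : Type u} [SmallCategory D]

theorem colimit_post_ι_apply (G : D ⥤ Type u) (F : Type u ⥤ Type u) (d : D)
    (a : F.obj (G.obj d)) : colimit.post G F (colimit.ι (G ⋙ F) d a) = F.map (colimit.ι G d) a :=
  ConcreteCategory.congr_hom (colimit.ι_post G F d) a

def powerFan (G : D ⥤ Type u) (k : Type u) : Fan (fun _ : k => G) :=
  Fan.mk (G ⋙ coyoneda.obj (op k)) fun i => { app := fun d => ↾fun (ρ : k ⟶ G.obj d) => ρ i }

noncomputable def isLimitPowerFan (G : D ⥤ Type u) (k : Type u) : IsLimit (powerFan G k) :=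
  evaluationJointlyReflectsLimits _ fun _ =>
    ((Types.isLimit_iff_bijective_sectionOfCone _).2
      ⟨fun _ _ h => ConcreteCategory.hom_ext _ _ fun i => congrArg (fun s => s.1 ⟨i⟩) h,
        fun s => ⟨↾fun i => s.1 ⟨i⟩, Subtype.ext (funext fun _ => rfl)⟩⟩).some

variable [IsSifted D]

theorem bijective_colimit_post_coyoneda (G : D ⥤ Type u) (k : Type u) [Finite k] :
    Function.Bijective (colimit.post G (coyoneda.obj (op k))) := by
  have hsection := (Types.isLimit_iff_bijective_sectionOfCone _).1
    ⟨isLimitOfPreserves colim (isLimitPowerFan G k)⟩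
  let e : ((Discrete.functor fun _ : k => G) ⋙ colim).sections → (k ⟶ colimit G) :=
    fun s => ↾fun i => s.1 ⟨i⟩
  have he : e.Bijective := by
    refine ⟨fun _ _ h => Subtype.ext (funext fun i => ConcreteCategory.congr_hom h i.as),
      fun f => ⟨⟨fun i => f i.as, fun {i j} g => ?_⟩, rfl⟩⟩
    obtain rfl : i = j := Discrete.ext (Discrete.eq_of_hom g)
    simp
  have hpost (x : colimit (G ⋙ coyoneda.obj (op k))) : colimit.post G (coyoneda.obj (op k)) x =
      e (Types.sectionOfCone (colim.mapCone (powerFan G k)) x) := by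
    obtain ⟨d, ρ, rfl⟩ := Types.jointly_surjective' x
    refine ConcreteCategory.hom_ext (C := Type u) _ _ fun i => ?_
    rw [colimit_post_ι_apply]
    exact (ConcreteCategory.congr_hom (ι_colimMap ((powerFan G k).π.app ⟨i⟩) d) ρ).symm
  refine ⟨fun x y h => hsection.1 (he.1 ?_), fun f => ?_⟩
  · rwa [hpost, hpost] at h
  · obtain ⟨s, rfl⟩ := he.2 f
    obtain ⟨x, rfl⟩ := hsection.2 s
    exact ⟨x, hpost x⟩

variable {G : D ⥤ Type u} {k : Type u} [Finite k]

theorem exists_comp_colimit_ι_eq (f : k ⟶ colimit G) :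
    ∃ (d : D) (ρ : k ⟶ G.obj d), ρ ≫ colimit.ι G d = f := by
  obtain ⟨x, rfl⟩ := (bijective_colimit_post_coyoneda G k).2 f
  obtain ⟨d, ρ, rfl⟩ := Types.jointly_surjective' x
  exact ⟨d, ρ, (colimit_post_ι_apply G (coyoneda.obj (op k)) d ρ).symm⟩

theorem colimit_ι_map_eq_of_comp_eq (F : Type u ⥤ Type u) (α : F.obj k) {d d' : D}
    {ρ : k ⟶ G.obj d} {ρ' : k ⟶ G.obj d'} (h : ρ ≫ colimit.ι G d = ρ' ≫ colimit.ι G d') :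
    colimit.ι (G ⋙ F) d (F.map ρ α) = colimit.ι (G ⋙ F) d' (F.map ρ' α) := by
  have hρ : colimit.ι (G ⋙ coyoneda.obj (op k)) d ρ =
      colimit.ι (G ⋙ coyoneda.obj (op k)) d' ρ' := by
    apply (bijective_colimit_post_coyoneda G k).1
    rw [colimit_post_ι_apply, colimit_post_ι_apply]
    exact h
  -- push `hρ` along the natural transformation `Hom(k, -) ⟶ F` classified by `α`
  simpa using congrArg (colimMap (Functor.whiskerLeft G (coyonedaEquiv.symm α))) hρ

end CategoryTheory.Limits

namespace Finset

variable (X : Type u)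

def functorToTypes : Finset X ⥤ Type u where
  obj S := S
  map f := ↾fun x => ⟨x.1, leOfHom f x.2⟩

def functorToTypesCocone : Cocone (functorToTypes X) where
  pt := X
  ι := { app := fun _ => ↾Subtype.val }

noncomputable def isColimitFunctorToTypesCocone : IsColimit (functorToTypesCocone X) := by
  classical
  exact Types.FilteredColimit.isColimitOf' _ _
    (fun x => ⟨{x}, ⟨x, mem_singleton_self x⟩, rfl⟩)
    (fun _ _ _ h => ⟨_, 𝟙 _, Subtype.ext h⟩)

end Finset

section Finitary

variable {F : Type u ⥤ Type u}

section

variable {X : Type u} [PreservesColimitsOfShape (Finset X) F]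

theorem exists_finset_map_subtypeVal_eq (x : F.obj X) :
    ∃ (S : Finset X) (z : F.obj S), F.map (↾Subtype.val) z = x :=
  Types.jointly_surjective _ (isColimitOfPreserves F (Finset.isColimitFunctorToTypesCocone X)) x

theorem exists_finset_factorization_map_eq {S : Type u} [Finite S] (f : S ⟶ X) {α β : F.obj S}
    (h : F.map f α = F.map f β) :
    ∃ (T : Finset X) (g : S ⟶ T), g ≫ ↾Subtype.val = f ∧ F.map g α = F.map g β := by
  classical
  let T₀ := (Set.finite_range f).toFinset
  let g₀ : S ⟶ T₀ := ↾fun s => ⟨f s, by simp [T₀]⟩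
  have hf : g₀ ≫ ↾Subtype.val = f := rfl
  rw [← hf, Functor.map_comp_apply, Functor.map_comp_apply] at h
  obtain ⟨T, i, hi⟩ := (Types.FilteredColimit.isColimit_eq_iff' (isColimitOfPreserves F
    (Finset.isColimitFunctorToTypesCocone X)) _ _).1 h
  exact ⟨T, g₀ ≫ (Finset.functorToTypes X).map i, rfl,
    (F.map_comp_apply _ _ α).trans (hi.trans (F.map_comp_apply _ _ β).symm)⟩

end

variable {D : Type u} [SmallCategory D] [IsSifted D] {G : D ⥤ Type u}
  [∀ X : Type u, PreservesColimitsOfShape (Finset X) F]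

theorem surjective_colimit_post : Function.Surjective (colimit.post G F) := by
  intro x
  obtain ⟨S, z, rfl⟩ := exists_finset_map_subtypeVal_eq x
  obtain ⟨d, ρ, hρ⟩ := exists_comp_colimit_ι_eq (↾Subtype.val : (S : Type u) ⟶ colimit G)
  refine ⟨colimit.ι (G ⋙ F) d (F.map ρ z), ?_⟩
  rw [colimit_post_ι_apply, ← Functor.map_comp_apply, hρ]

theorem injective_colimit_post : Function.Injective (colimit.post G F) := by
  intro p q h
  obtain ⟨d, a, rfl⟩ := Types.jointly_surjective' p
  obtain ⟨d', b, rfl⟩ := Types.jointly_surjective' q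
  obtain ⟨S, α, rfl⟩ := exists_finset_map_subtypeVal_eq a
  obtain ⟨S', β, rfl⟩ := exists_finset_map_subtypeVal_eq b
  rw [colimit_post_ι_apply, colimit_post_ι_apply, ← Functor.map_comp_apply,
    ← Functor.map_comp_apply] at h
  -- compare `α` and `β` inside the single finite set `S ⊕ S'`
  let f : (S ⊕ S' : Type u) ⟶ colimit G :=
    ↾Sum.elim (↾Subtype.val ≫ colimit.ι G d) (↾Subtype.val ≫ colimit.ι G d')
  obtain ⟨T, g, hg, hαβ⟩ := exists_finset_factorization_map_eq f
    (α := F.map (↾Sum.inl) α) (β := F.map (↾Sum.inr) β) (by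
      rw [← Functor.map_comp_apply, ← Functor.map_comp_apply]
      exact h)
  obtain ⟨e, t, ht⟩ := exists_comp_colimit_ι_eq (↾Subtype.val : (T : Type u) ⟶ colimit G)
  have hα := colimit_ι_map_eq_of_comp_eq F α (ρ := ↾Subtype.val) (ρ' := ↾Sum.inl ≫ g ≫ t)
    (by rw [Category.assoc, Category.assoc, ht, hg]; rfl)
  have hβ := colimit_ι_map_eq_of_comp_eq F β (ρ := ↾Subtype.val) (ρ' := ↾Sum.inr ≫ g ≫ t)
    (by rw [Category.assoc, Category.assoc, ht, hg]; rfl)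
  rw [hα, hβ, F.map_comp_apply, F.map_comp_apply, F.map_comp_apply, F.map_comp_apply, hαβ]

theorem preservesColimitsOfShape_of_preservesColimitsOfShape_finset :
    PreservesColimitsOfShape D F where
  preservesColimit {G} :=
    have : IsIso (colimit.post G F) :=
      (isIso_iff_bijective _).2 ⟨injective_colimit_post, surjective_colimit_post⟩
    preservesColimit_of_isIso_post F G

end Finitary

/-- `Set` is the free completion of the finite sets under filtered colimits as well as
under sifted colimits (in particular every set is a filtered colimit, and also a sifted
colimit, of finite sets); consequently an endofunctor of `Set` preserves filtered colimits
if and only if it preserves sifted colimits. -/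
theorem stmt19 :
    (∀ X : Type u, ∃ D : Cat.{u, u}, IsFiltered D ∧ ∃ G : D ⥤ Type u,
      (∀ d : D, Finite (G.obj d)) ∧ Nonempty (colimit G ≅ X)) ∧
    (∀ X : Type u, ∃ D : Cat.{u, u}, IsSifted D ∧ ∃ G : D ⥤ Type u,
      (∀ d : D, Finite (G.obj d)) ∧ Nonempty (colimit G ≅ X)) ∧
    ∀ F : Type u ⥤ Type u,
      (∀ D : Cat.{u, u}, IsFiltered D → Nonempty (PreservesColimitsOfShape D F)) ↔
        (∀ D : Cat.{u, u}, IsSifted D → Nonempty (PreservesColimitsOfShape D F)) := by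
  classical
  have filtered (X : Type u) : ∃ D : Cat.{u, u}, IsFiltered D ∧ ∃ G : D ⥤ Type u,
      (∀ d : D, Finite (G.obj d)) ∧ Nonempty (colimit G ≅ X) :=
    ⟨Cat.of (Finset X), inferInstanceAs (IsFiltered (Finset X)), Finset.functorToTypes X,
      fun (S : Finset X) => inferInstanceAs (Finite S),
      ⟨(colimit.isColimit _).coconePointUniqueUpToIso (Finset.isColimitFunctorToTypesCocone X)⟩⟩
  refine ⟨filtered, fun X => ?_, fun F => ⟨fun hF D hD => ?_, fun hF D hD => hF D hD.isSifted⟩⟩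
  · obtain ⟨D, hD, G, hG⟩ := filtered X
    exact ⟨D, hD.isSifted, G, hG⟩
  · have (X : Type u) : PreservesColimitsOfShape (Finset X) F :=
      (hF (Cat.of (Finset X)) (inferInstanceAs (IsFiltered (Finset X)))).some
    exact ⟨preservesColimitsOfShape_of_preservesColimitsOfShape_finset⟩
end
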